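/- For every integer n ≥ 3, the cycle C_n satisfies γ_MB(C_n) = γ_MB'(C_n) = ⌊n/2⌋. -/

import Mathlib

variable {V : Type*}

/-- `D` dominates every vertex of `G` outside of `A`: each such vertex lies in the
closed neighborhood of some member of `D`. (Take `A = ∅` for ordinary domination.) -/
def Dominates (G : SimpleGraph V) (A : Set V) (D : Finset V) : Prop :=
  ∀ v : V, v ∉ A → ∃ u ∈ D, u = v ∨ G.Adj u v

/-- `MBWin G A t k D S`: in the Maker-Breaker domination game on `G` where the vertices of
`A` are regarded as already dominated, with `D` the set of vertices selected so far by
Dominator, `S` the set selected so far by Staller, and where it is Dominator's turn if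
`t = true` and Staller's turn if `t = false`, Dominator has a strategy guaranteeing that
his selected vertices dominate `V \ A` after he selects at most `k` further vertices.
Players alternately select vertices not previously selected by either player; if no
unselected vertex remains and Dominator's vertices do not dominate, Dominator has lost. -/
inductive MBWin [Fintype V] [DecidableEq V] (G : SimpleGraph V) (A : Set V) :
    Bool → ℕ → Finset V → Finset V → Prop
  | win (t : Bool) (k : ℕ) (D S : Finset V) : Dominates G A D → MBWin G A t k D S
  | dmove (k : ℕ) (D S : Finset V) (v : V) : v ∉ D → v ∉ S →
      MBWin G A false k (insert v D) S → MBWin G A true (k + 1) D S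
  | smove (k : ℕ) (D S : Finset V) : D ∪ S ≠ Finset.univ →
      (∀ v, v ∉ D → v ∉ S → MBWin G A true k D (insert v S)) → MBWin G A false k D S

/-- The Maker-Breaker domination number `γ_MB(G|A)` of the game in which the vertices of `A`
are regarded as already dominated and Dominator moves first: the minimum `m` such that
Dominator has a winning strategy using at most `m` of his own moves, and `⊤ = ∞` if
Dominator has no winning strategy. -/
noncomputable def gammaMBRes [Fintype V] [DecidableEq V] (G : SimpleGraph V) (A : Set V) :
    ℕ∞ :=
  sInf ((fun m : ℕ => (m : ℕ∞)) '' {m : ℕ | MBWin G A true m ∅ ∅})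

/-- `γ_MB'(G|A)`: as `gammaMBRes`, but Staller moves first. -/
noncomputable def gammaMBRes' [Fintype V] [DecidableEq V] (G : SimpleGraph V) (A : Set V) :
    ℕ∞ :=
  sInf ((fun m : ℕ => (m : ℕ∞)) '' {m : ℕ | MBWin G A false m ∅ ∅})

/-- The Maker-Breaker domination number `γ_MB(G)` (Dominator moves first). -/
noncomputable def gammaMB [Fintype V] [DecidableEq V] (G : SimpleGraph V) : ℕ∞ :=
  gammaMBRes G ∅

/-- The Staller-start Maker-Breaker domination number `γ_MB'(G)`. -/
noncomputable def gammaMB' [Fintype V] [DecidableEq V] (G : SimpleGraph V) : ℕ∞ :=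
  gammaMBRes' G ∅

/-- The domination number `γ(G)`: the minimum size of a dominating set of `G`. -/
noncomputable def dominationNumber [Fintype V] (G : SimpleGraph V) : ℕ :=
  sInf {m : ℕ | ∃ D : Finset V, Dominates G ∅ D ∧ D.card = m}

/-- A `γ`-set of `G`: a dominating set of minimum size. -/
def IsGammaSet [Fintype V] (G : SimpleGraph V) (D : Finset V) : Prop :=
  Dominates G ∅ D ∧ D.card = dominationNumber G

/-!
Upper bound: after a first vertex `b` (in the S-game `b = v - 1`, where `v` is Staller's first
vertex) Dominator splits `b + 2, …, b + 2⌊n/2⌋ - 1` into consecutive pairs and answers every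
Staller move inside a pair with the other vertex of that pair.

Lower bound (`n ≥ 4`): let `σ(D)` be the largest size of an independent set of vertices not
dominated by `D`. Dominator's first vertex leaves `σ ≥ ⌊n/2⌋ - 1`, and any vertex lowers `σ` by
at most 2. Staller answers every move so that Dominator's next vertex either lowers `σ` by at most
1 or lets her claim a whole closed neighbourhood. Hence Dominator needs at least
`1 + (⌊n/2⌋ - 1)` vertices.
-/

open Finset Fin.NatCast Fin.CommRing

namespace SimpleGraph

section Domination

variable [Fintype V] [DecidableEq V] (G : SimpleGraph V) [DecidableRel G.Adj]

def closedNeighborFinset (v : V) : Finset V := insert v (G.neighborFinset v)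

def undominated (D : Finset V) : Finset V := {u | Disjoint (G.closedNeighborFinset u) D}

noncomputable def undominatedIndepNum (D : Finset V) : ℕ :=
  ((G.undominated D).powerset.filter fun T : Finset V => G.IsIndepSet (T : Set V)).sup card

lemma exists_card_eq_undominatedIndepNum (D : Finset V) :
    ∃ T ⊆ G.undominated D, G.IsIndepSet (T : Set V) ∧ #T = G.undominatedIndepNum D := by
  obtain ⟨T, hT, hsup⟩ := exists_mem_eq_sup
    ((G.undominated D).powerset.filter fun T : Finset V => G.IsIndepSet (T : Set V))
    ⟨∅, by simp⟩ card
  rw [mem_filter, mem_powerset] at hT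
  exact ⟨T, hT.1, hT.2, hsup.symm⟩

variable {G} {D T : Finset V} {u v w : V}

lemma mem_closedNeighborFinset : u ∈ G.closedNeighborFinset v ↔ u = v ∨ G.Adj v u := by
  simp [closedNeighborFinset]

lemma mem_closedNeighborFinset_comm :
    u ∈ G.closedNeighborFinset v ↔ v ∈ G.closedNeighborFinset u := by
  simp only [mem_closedNeighborFinset, eq_comm, G.adj_comm]

lemma mem_undominated : u ∈ G.undominated D ↔ ∀ d ∈ D, d ∉ G.closedNeighborFinset u := by
  simp [undominated, disjoint_right]

lemma notMem_of_mem_undominated (hu : u ∈ G.undominated D) (hv : v ∈ G.closedNeighborFinset u) :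
    v ∉ D :=
  fun hvD => mem_undominated.1 hu v hvD hv

lemma notMem_of_mem_undominated_self (hu : u ∈ G.undominated D) : u ∉ D :=
  notMem_of_mem_undominated hu (mem_insert_self _ _)

lemma mem_undominated_insert :
    u ∈ G.undominated (insert w D) ↔ u ∈ G.undominated D ∧ w ∉ G.closedNeighborFinset u := by
  simp only [mem_undominated, forall_mem_insert]
  exact and_comm

lemma dominates_iff_undominated_eq_empty : Dominates G ∅ D ↔ G.undominated D = ∅ := by
  simp only [Dominates, Set.mem_empty_iff_false, not_false_eq_true, forall_const,
    eq_empty_iff_forall_notMem, mem_undominated, not_forall, not_not, mem_closedNeighborFinset,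
    exists_prop]
  exact forall_congr' fun v => exists_congr fun u =>
    and_congr_right' <| or_congr Iff.rfl (G.adj_comm _ _)

lemma card_le_undominatedIndepNum (hT : T ⊆ G.undominated D) (hI : G.IsIndepSet (T : Set V)) :
    #T ≤ G.undominatedIndepNum D :=
  le_sup (f := card) (mem_filter.2 ⟨mem_powerset.2 hT, hI⟩)

lemma undominatedIndepNum_eq_zero (hD : Dominates G ∅ D) : G.undominatedIndepNum D = 0 := by
  obtain ⟨T, hT, -, hcard⟩ := exists_card_eq_undominatedIndepNum G D
  rw [dominates_iff_undominated_eq_empty.1 hD, subset_empty] at hT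
  simp [← hcard, hT]

lemma undominatedIndepNum_le_add {D' : Finset V} {c : ℕ}
    (h : ∀ T ⊆ G.undominated D, G.IsIndepSet (T : Set V) →
      ∃ T' ⊆ G.undominated D', G.IsIndepSet (T' : Set V) ∧ #T ≤ #T' + c) :
    G.undominatedIndepNum D ≤ G.undominatedIndepNum D' + c := by
  obtain ⟨T, hT, hI, hcard⟩ := exists_card_eq_undominatedIndepNum G D
  obtain ⟨T', hT', hI', hle⟩ := h T hT hI
  have := card_le_undominatedIndepNum hT' hI'
  omega

lemma sdiff_closedNeighborFinset_subset_undominated_insert (hT : T ⊆ G.undominated D) :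
    T \ G.closedNeighborFinset w ⊆ G.undominated (insert w D) := fun x hx => by
  rw [mem_sdiff, mem_closedNeighborFinset_comm] at hx
  exact mem_undominated_insert.2 ⟨hT hx.1, hx.2⟩

lemma undominatedIndepNum_le_insert_add {c : ℕ}
    (h : ∀ T ⊆ G.undominated D, G.IsIndepSet (T : Set V) → #(T ∩ G.closedNeighborFinset w) ≤ c) :
    G.undominatedIndepNum D ≤ G.undominatedIndepNum (insert w D) + c :=
  undominatedIndepNum_le_add fun T hT hI =>
    ⟨_, sdiff_closedNeighborFinset_subset_undominated_insert hT, hI.mono (by simp), by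
      have := card_sdiff_add_card_inter T (G.closedNeighborFinset w)
      have := h T hT hI
      omega⟩

end Domination

end SimpleGraph

open SimpleGraph

section Game

variable {G : SimpleGraph V} {t : Bool} {k : ℕ} {D S : Finset V}

lemma not_dominates_empty [Nonempty V] : ¬Dominates G ∅ ∅ := fun hdom => by
  simpa using hdom (Classical.arbitrary V) (Set.notMem_empty _)

variable [Fintype V] [DecidableEq V]

lemma exists_notMem_of_union_ne_univ (h : D ∪ S ≠ univ) : ∃ z, z ∉ D ∧ z ∉ S := by
  by_contra! hz
  exact h (eq_univ_of_forall fun z => by by_cases hzD : z ∈ D <;> simp_all)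

lemma MBWin.pos_of_empty [Nonempty V] (h : MBWin G ∅ t k ∅ S) : 0 < k := by
  cases h with
  | win _ _ _ _ hdom => exact absurd hdom not_dominates_empty
  | dmove => omega
  | smove _ _ _ hne hall =>
    obtain ⟨z, hz, hzS⟩ := exists_notMem_of_union_ne_univ hne
    cases hall z hz hzS with
    | win _ _ _ _ hdom => exact absurd hdom not_dominates_empty
    | dmove => omega

end Game

section Pairing

variable {G : SimpleGraph V} {A : Set V} {ι : Type*} {I : Finset ι} {a b : ι → V}

lemma exists_pairing_reply (ha : Set.InjOn a I) (hb : Set.InjOn b I)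
    (hab : ∀ i ∈ I, ∀ j ∈ I, a i ≠ b j) (hI : I.Nonempty) (v : V) :
    ∃ i ∈ I, ∃ w, (w = a i ∨ w = b i) ∧ w ≠ v ∧ ∀ j ∈ I, j ≠ i → a j ≠ v ∧ b j ≠ v := by
  by_cases hva : ∃ i ∈ I, a i = v
  · obtain ⟨i, hi, rfl⟩ := hva
    exact ⟨i, hi, b i, .inr rfl, (hab i hi i hi).symm, fun j hj hji =>
      ⟨fun h => hji (ha hj hi h), (hab i hi j hj).symm⟩⟩
  by_cases hvb : ∃ i ∈ I, b i = v
  · obtain ⟨i, hi, rfl⟩ := hvb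
    exact ⟨i, hi, a i, .inl rfl, hab i hi i hi, fun j hj hji =>
      ⟨hab j hj i hi, fun h => hji (hb hj hi h)⟩⟩
  push Not at hva hvb
  obtain ⟨i, hi⟩ := hI
  exact ⟨i, hi, a i, .inl rfl, hva i hi, fun j hj _ => ⟨hva j hj, hvb j hj⟩⟩

variable [Fintype V] [DecidableEq V] [DecidableEq ι]

theorem mbWin_false_card_of_pairing (ha : Set.InjOn a I) (hb : Set.InjOn b I)
    (hab : ∀ i ∈ I, ∀ j ∈ I, a i ≠ b j) {D S : Finset V}
    (hfree : ∀ i ∈ I, a i ∉ D ∪ S ∧ b i ∉ D ∪ S)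
    (hdom : ∀ D', D ⊆ D' → (∀ i ∈ I, a i ∈ D' ∨ b i ∈ D') → Dominates G A D') :
    MBWin G A false #I D S := by
  induction I using Finset.strongInduction generalizing D S with
  | H I ih =>
  rcases I.eq_empty_or_nonempty with rfl | hI
  · exact .win _ _ _ _ (hdom D subset_rfl (by simp))
  obtain ⟨i₀, hi₀⟩ := hI
  refine .smove _ _ _ (fun h => (hfree i₀ hi₀).1 (h ▸ mem_univ _)) fun v hvD hvS => ?_
  obtain ⟨i, hi, w, hw, hwv, hv⟩ := exists_pairing_reply ha hb hab ⟨i₀, hi₀⟩ v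
  have hwi : w ∉ D ∪ S := by rcases hw with rfl | rfl <;> simp [hfree i hi]
  have hw' : ∀ j ∈ I.erase i, w ≠ a j ∧ w ≠ b j := by
    intro j hj
    obtain ⟨hji, hj⟩ := mem_erase.1 hj
    rcases hw with rfl | rfl
    exacts [⟨fun h => hji (ha hj hi h.symm), hab i hi j hj⟩,
      ⟨(hab j hj i hi).symm, fun h => hji (hb hj hi h.symm)⟩]
  have hwD : w ∉ D := fun h => hwi (mem_union_left _ h)
  have hwS : w ∉ insert v S := by simp_all
  have hfree' : ∀ j ∈ I.erase i, a j ∉ insert w D ∪ insert v S ∧ b j ∉ insert w D ∪ insert v S := by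
    intro j hj
    have := hfree j (mem_of_mem_erase hj)
    have := hv j (mem_of_mem_erase hj) (ne_of_mem_erase hj)
    have := hw' j hj
    simp_all [eq_comm]
  have hdom' : ∀ D', insert w D ⊆ D' → (∀ j ∈ I.erase i, a j ∈ D' ∨ b j ∈ D') →
      Dominates G A D' := by
    refine fun D' hD' hhit => hdom D' ((subset_insert _ _).trans hD') fun j hj => ?_
    by_cases hji : j = i
    · subst hji
      rcases hw with rfl | rfl
      exacts [.inl (hD' (mem_insert_self _ _)), .inr (hD' (mem_insert_self _ _))]
    · exact hhit j (mem_erase.2 ⟨hji, hj⟩)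
  rw [← card_erase_add_one hi]
  exact .dmove _ _ _ w hwD hwS <| ih _ (erase_ssubset hi) (ha.mono (by simp)) (hb.mono (by simp))
    (fun j hj k hk => hab j (mem_of_mem_erase hj) k (mem_of_mem_erase hk)) hfree' hdom'

end Pairing

namespace Fin

variable {n : ℕ} [NeZero n]

lemma natCast_inj_of_lt {i j : ℕ} (hi : i < n) (hj : j < n) : (i : Fin n) = j ↔ i = j := by
  rw [Fin.ext_iff, Fin.val_cast_of_lt hi, Fin.val_cast_of_lt hj]

lemma natCast_ne_zero_of_pos_of_lt {k : ℕ} (hk : 0 < k) (hkn : k < n) : (k : Fin n) ≠ 0 := by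
  rw [Ne, Fin.natCast_eq_zero]
  exact Nat.not_dvd_of_pos_of_lt hk hkn

lemma exists_and_not_sub_one {P : Fin n → Prop} {x y : Fin n} (hx : P x) (hy : ¬P y) :
    ∃ z, P z ∧ ¬P (z - 1) := by
  by_contra! hP
  have hP' : ∀ k : ℕ, P (x - k) := by
    intro k
    induction k with
    | zero => simpa using hx
    | succ k ih => simpa [sub_sub] using hP _ ih
  exact hy (by simpa using hP' (x - y).val)

end Fin

section Cycle

variable {m : ℕ}

lemma cycleGraph_adj_iff {u v : Fin (m + 2)} :
    (cycleGraph (m + 2)).Adj u v ↔ v = u + 1 ∨ u = v + 1 := by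
  rw [cycleGraph_adj, sub_eq_iff_eq_add, sub_eq_iff_eq_add, add_comm 1 v, add_comm 1 u, or_comm]

lemma mem_closedNeighborFinset_cycleGraph {u v : Fin (m + 2)} :
    u ∈ (cycleGraph (m + 2)).closedNeighborFinset v ↔ u = v - 1 ∨ u = v ∨ u = v + 1 := by
  rw [mem_closedNeighborFinset, cycleGraph_adj_iff, eq_sub_iff_add_eq, eq_comm (a := v)]
  tauto

lemma isIndepSet_cycleGraph_iff {T : Finset (Fin (m + 2))} :
    (cycleGraph (m + 2)).IsIndepSet (T : Set (Fin (m + 2))) ↔ ∀ x ∈ T, x + 1 ∉ T := by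
  constructor
  · intro h x hx hx1
    exact h hx hx1 (succ_ne_self x).symm (cycleGraph_adj_iff.2 (.inl rfl))
  · rintro h x hx y hy - hxy
    rcases cycleGraph_adj_iff.1 hxy with rfl | rfl
    exacts [h x hx hy, h y hy hx]

lemma card_inter_pair_le_one {T : Finset (Fin (m + 2))} (hT : ∀ x ∈ T, x + 1 ∉ T)
    (x : Fin (m + 2)) : #(T ∩ {x, x + 1}) ≤ 1 := by
  refine card_le_one.2 fun a ha b hb => ?_
  simp only [mem_inter, mem_insert, mem_singleton] at ha hb
  obtain ⟨haT, rfl | rfl⟩ := ha <;> obtain ⟨hbT, rfl | rfl⟩ := hb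
  exacts [rfl, absurd hbT (hT _ haT), absurd haT (hT _ hbT), rfl]

lemma card_inter_closedNeighborFinset_le_two {T : Finset (Fin (m + 2))}
    (hT : ∀ x ∈ T, x + 1 ∉ T) (v : Fin (m + 2)) :
    #(T ∩ (cycleGraph (m + 2)).closedNeighborFinset v) ≤ 2 := by
  have hsub : T ∩ (cycleGraph (m + 2)).closedNeighborFinset v ⊆
      T ∩ {v - 1, v - 1 + 1} ∪ {v + 1} := by
    intro x hx
    rw [mem_inter, mem_closedNeighborFinset_cycleGraph] at hx
    simp only [mem_union, mem_inter, mem_insert, mem_singleton, sub_add_cancel]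
    tauto
  calc _ ≤ #(T ∩ {v - 1, v - 1 + 1}) + #{v + 1} := (card_le_card hsub).trans (card_union_le _ _)
    _ ≤ 2 := by have := card_inter_pair_le_one hT (v - 1); simp only [card_singleton]; omega

lemma add_natCast_inj (b : Fin (m + 2)) {i j : ℕ} (hi : i < m + 2) (hj : j < m + 2) :
    b + (i : Fin (m + 2)) = b + j ↔ i = j := by
  rw [add_right_inj, Fin.natCast_inj_of_lt hi hj]

lemma add_natCast_ne_self (b : Fin (m + 2)) {j : ℕ} (hj0 : 0 < j) (hj : j < m + 2) :
    b + (j : Fin (m + 2)) ≠ b := by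
  rw [Ne, add_eq_left, ← Nat.cast_zero (R := Fin (m + 2)), Fin.natCast_inj_of_lt hj (by omega)]
  omega

lemma add_natCast_ne_add_one (b : Fin (m + 2)) {j : ℕ} (hj1 : j ≠ 1) (hj : j < m + 2) :
    b + (j : Fin (m + 2)) ≠ b + 1 := by
  rwa [← Nat.cast_one (R := Fin (m + 2)), Ne, add_natCast_inj b hj (by omega)]

lemma sub_one_eq_add_natCast (b : Fin (m + 2)) : b - 1 = b + ((m + 1 : ℕ) : Fin (m + 2)) := by
  rw [sub_eq_add_neg, neg_eq_of_add_eq_zero_left (a := ((m + 1 : ℕ) : Fin (m + 2)))]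
  rw [← Nat.cast_add_one (R := Fin (m + 2)), Fin.natCast_self]

lemma dominates_of_hits_pairs {b : Fin (m + 2)} {D : Finset (Fin (m + 2))} (hb : b ∈ D)
    (hhit : ∀ i ∈ range ((m + 2) / 2 - 1),
      b + ((2 * i + 2 : ℕ) : Fin (m + 2)) ∈ D ∨ b + ((2 * i + 3 : ℕ) : Fin (m + 2)) ∈ D) :
    Dominates (cycleGraph (m + 2)) ∅ D := by
  intro x _
  obtain ⟨j, hj, rfl⟩ : ∃ j < m + 2, x = b + (j : Fin (m + 2)) :=
    ⟨(x - b).val, (x - b).isLt, by rw [Fin.cast_val_eq_self, add_sub_cancel]⟩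
  by_cases hfar : 2 ≤ j ∧ j ≤ m
  · obtain ⟨i, hi, rfl | rfl⟩ : ∃ i ∈ range ((m + 2) / 2 - 1), j = 2 * i + 2 ∨ j = 2 * i + 3 :=
      ⟨(j - 2) / 2, mem_range.2 (by omega), by omega⟩
    · have hadj : (cycleGraph (m + 2)).Adj (b + ((2 * i + 3 : ℕ) : Fin (m + 2)))
          (b + ((2 * i + 2 : ℕ) : Fin (m + 2))) := cycleGraph_adj_iff.2 (.inr (by push_cast; ring))
      exact (hhit i hi).elim (⟨_, ·, .inl rfl⟩) (⟨_, ·, .inr hadj⟩)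
    · have hadj : (cycleGraph (m + 2)).Adj (b + ((2 * i + 2 : ℕ) : Fin (m + 2)))
          (b + ((2 * i + 3 : ℕ) : Fin (m + 2))) := cycleGraph_adj_iff.2 (.inl (by push_cast; ring))
      exact (hhit i hi).elim (⟨_, ·, .inr hadj⟩) (⟨_, ·, .inl rfl⟩)
  · refine ⟨b, hb, ?_⟩
    obtain rfl | rfl | rfl : j = 0 ∨ j = 1 ∨ j = m + 1 := by omega
    · simp
    · exact .inr (cycleGraph_adj_iff.2 (.inl (by simp)))
    · rw [← sub_one_eq_add_natCast]
      exact .inr (cycleGraph_adj_iff.2 (.inr (sub_add_cancel b 1).symm))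

lemma mbWin_false_after_first_move (b : Fin (m + 2)) {S : Finset (Fin (m + 2))}
    (hS : S ⊆ {b + 1}) :
    MBWin (cycleGraph (m + 2)) ∅ false ((m + 2) / 2 - 1) {b} S := by
  have hinj : ∀ i ∈ (range ((m + 2) / 2 - 1) : Set ℕ), ∀ j ∈ (range ((m + 2) / 2 - 1) : Set ℕ),
      ∀ c ≤ 3, ∀ c' ≤ 3,
        b + ((2 * i + c : ℕ) : Fin (m + 2)) = b + ((2 * j + c' : ℕ) : Fin (m + 2)) →
          2 * i + c = 2 * j + c' := by
    intro i hi j hj c _ c' _ h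
    simp only [coe_range, Set.mem_Iio] at hi hj
    exact (add_natCast_inj b (by omega) (by omega)).1 h
  have hfree : ∀ j, 2 ≤ j → j < m + 2 → b + (j : Fin (m + 2)) ∉ {b} ∪ S := by
    intro j hj2 hj h
    rcases mem_union.1 h with h | h
    · exact add_natCast_ne_self b (by omega) hj (mem_singleton.1 h)
    · exact add_natCast_ne_add_one b (by omega) hj (mem_singleton.1 (hS h))
  have h := mbWin_false_card_of_pairing (G := cycleGraph (m + 2)) (A := ∅)
    (I := range ((m + 2) / 2 - 1)) (a := fun i => b + ((2 * i + 2 : ℕ) : Fin (m + 2)))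
    (b := fun i => b + ((2 * i + 3 : ℕ) : Fin (m + 2)))
    (fun i hi j hj h => by have := hinj i hi j hj 2 (by omega) 2 (by omega) h; omega)
    (fun i hi j hj h => by have := hinj i hi j hj 3 (by omega) 3 (by omega) h; omega)
    (fun i hi j hj h => by
      have := hinj i (by simpa using hi) j (by simpa using hj) 2 (by omega) 3 (by omega) h; omega)
    (fun i hi => by
      rw [mem_range] at hi
      exact ⟨hfree _ (by omega) (by omega), hfree _ (by omega) (by omega)⟩)
    (fun D' hD' hhit => dominates_of_hits_pairs (hD' (mem_singleton_self b)) hhit)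
  rwa [card_range] at h

theorem mbWin_cycleGraph_half (m : ℕ) :
    MBWin (cycleGraph (m + 2)) ∅ true ((m + 2) / 2) ∅ ∅ ∧
      MBWin (cycleGraph (m + 2)) ∅ false ((m + 2) / 2) ∅ ∅ := by
  have hk : (m + 2) / 2 = (m + 2) / 2 - 1 + 1 := by omega
  have hne : (∅ : Finset (Fin (m + 2))) ∪ ∅ ≠ univ := by
    simpa using (univ_neq_empty (Fin (m + 2))).symm
  refine ⟨?_, .smove _ _ _ hne fun v _ _ => ?_⟩ <;> rw [hk]
  · exact .dmove _ _ _ 0 (by simp) (by simp) (mbWin_false_after_first_move 0 (by simp))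
  · exact .dmove _ _ _ (v - 1) (by simp) (by simp [sub_eq_self])
      (mbWin_false_after_first_move (v - 1) (by simp))

end Cycle

section LowerBound

variable {m : ℕ} {D S T : Finset (Fin (m + 4))} {s u v w e : Fin (m + 4)}

local notation "U" => SimpleGraph.undominated (cycleGraph (m + 4))
local notation "N" => SimpleGraph.closedNeighborFinset (cycleGraph (m + 4))
local notation "σ" => SimpleGraph.undominatedIndepNum (cycleGraph (m + 4))

lemma natCast_mul_unit_ne_zero (he : e = 1 ∨ e = -1) {k : ℕ} (hk : 0 < k) (hkm : k < m + 4) :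
    (k : Fin (m + 4)) * e ≠ 0 := by
  rcases he with rfl | rfl <;> simpa using Fin.natCast_ne_zero_of_pos_of_lt hk hkm

lemma mem_closedNeighborFinset_iff_of_unit (he : e = 1 ∨ e = -1) :
    u ∈ N v ↔ u = v - e ∨ u = v ∨ u = v + e := by
  rw [mem_closedNeighborFinset_cycleGraph]
  rcases he with rfl | rfl
  · rfl
  · rw [sub_neg_eq_add, ← sub_eq_add_neg]; tauto

lemma neg_eq_one_or_neg_one (he : e = 1 ∨ e = -1) : -e = 1 ∨ -e = -1 := by
  rcases he with rfl | rfl <;> simp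

lemma mem_undominated_iff_of_unit (he : e = 1 ∨ e = -1) :
    v ∈ U D ↔ v - e ∉ D ∧ v ∉ D ∧ v + e ∉ D := by
  simp only [mem_undominated, mem_closedNeighborFinset_iff_of_unit he]
  constructor
  · intro h
    exact ⟨fun h' => h _ h' (.inl rfl), fun h' => h _ h' (.inr (.inl rfl)),
      fun h' => h _ h' (.inr (.inr rfl))⟩
  · rintro ⟨h₁, h₂, h₃⟩ d hd (rfl | rfl | rfl) <;> contradiction

/-- Staller owns an undominated `s` and its neighbour `s + e`. Only `s - e` can still dominate `s`
and, unless `s + 2e` is Dominator's, only `s + 2e` can dominate `s + e`; so Dominator, to move,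
cannot dominate both. -/
def DoubleThreat (D S : Finset (Fin (m + 4))) : Prop :=
  ∃ s ∈ S, s ∈ U D ∧ ∃ e : Fin (m + 4), (e = 1 ∨ e = -1) ∧ s + e ∈ S ∧ (s + 2 * e ∉ D ∨ s - e ∈ S)

def Threat (D S : Finset (Fin (m + 4))) : Prop :=
  ∃ s ∈ S, s ∈ U D ∧ ∃ e : Fin (m + 4), (e = 1 ∨ e = -1) ∧ (s + e ∈ S ∨ s + 2 * e ∉ D)

lemma DoubleThreat.threat_insert (h : DoubleThreat D S) (hv : v ∉ S) : Threat (insert v D) S := by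
  obtain ⟨s, hsS, hsU, e, he, hseS, hfar⟩ := h
  by_cases hve : v = s - e
  · subst hve
    have hfar : s + 2 * e ∉ D := hfar.resolve_right hv
    have hsU' := (mem_undominated_iff_of_unit he).1 hsU
    refine ⟨s + e, hseS, mem_undominated_insert.2 ⟨?_, ?_⟩, -e, neg_eq_one_or_neg_one he,
      .inl (by simpa using hsS)⟩
    · rw [mem_undominated_iff_of_unit he, add_sub_cancel_right, add_assoc, ← two_mul]
      exact ⟨hsU'.2.1, hsU'.2.2, hfar⟩
    · rw [mem_closedNeighborFinset_iff_of_unit he]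
      rintro (h | h | h)
      · exact natCast_mul_unit_ne_zero he (k := 1) one_pos (by omega) (by linear_combination -h)
      · exact natCast_mul_unit_ne_zero he (k := 2) two_pos (by omega) (by linear_combination -h)
      · exact natCast_mul_unit_ne_zero he (k := 3) three_pos (by omega) (by linear_combination -h)
  · refine ⟨s, hsS, mem_undominated_insert.2 ⟨hsU, ?_⟩, e, he, .inl hseS⟩
    rw [mem_closedNeighborFinset_iff_of_unit he]
    rintro (h | rfl | rfl)
    exacts [hve h, hv hsS, hv hseS]

lemma Threat.exists_doubleThreat (h : Threat D S) (hfree : ∃ z, z ∉ D ∧ z ∉ S) :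
    ∃ v, v ∉ D ∧ v ∉ S ∧ DoubleThreat D (insert v S) := by
  obtain ⟨s, hsS, hsU, e, he, hnear⟩ := h
  have hsU' := (mem_undominated_iff_of_unit he).1 hsU
  by_cases hse : s + e ∈ S
  · by_cases hsm : s - e ∈ S
    · obtain ⟨z, hzD, hzS⟩ := hfree
      exact ⟨z, hzD, hzS, s, mem_insert_of_mem hsS, hsU, e, he, mem_insert_of_mem hse,
        .inr (mem_insert_of_mem hsm)⟩
    · refine ⟨s - e, hsU'.1, hsm, s, mem_insert_of_mem hsS, hsU, -e, neg_eq_one_or_neg_one he,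
        ?_, .inr ?_⟩
      · rw [← sub_eq_add_neg]; exact mem_insert_self _ _
      · rw [sub_neg_eq_add]; exact mem_insert_of_mem hse
  · exact ⟨s + e, hsU'.2.2, hse, s, mem_insert_of_mem hsS, hsU, e, he, mem_insert_self _ _,
      .inl (hnear.resolve_left hse)⟩

theorem MBWin.not_threat {t : Bool} {k : ℕ} (h : MBWin (cycleGraph (m + 4)) ∅ t k D S) :
    (t = true → ¬DoubleThreat D S) ∧ (t = false → ¬Threat D S) := by
  induction h with
  | win t k D S hD =>
    have hU := dominates_iff_undominated_eq_empty.1 hD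
    constructor <;> rintro - ⟨s, -, hsU, -⟩ <;> simp [hU] at hsU
  | dmove k D S v _ hvS _ ih => exact ⟨fun _ hT => ih.2 rfl (hT.threat_insert hvS), nofun⟩
  | smove k D S hne _ ih =>
    refine ⟨nofun, fun _ hT => ?_⟩
    obtain ⟨v, hvD, hvS, hv⟩ := hT.exists_doubleThreat (exists_notMem_of_union_ne_univ hne)
    exact (ih v hvD hvS).1 rfl hv

lemma undominatedIndepNum_le_insert_add_two (D : Finset (Fin (m + 4))) (w : Fin (m + 4)) :
    σ D ≤ σ (insert w D) + 2 :=
  undominatedIndepNum_le_insert_add fun _ _ hI =>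
    card_inter_closedNeighborFinset_le_two (isIndepSet_cycleGraph_iff.1 hI) w

lemma undominatedIndepNum_le_insert_add_one_of_notMem_undominated (hwD : w ∉ D)
    (hwU : w ∉ U D) : σ D ≤ σ (insert w D) + 1 := by
  obtain ⟨e, he, hweD⟩ : ∃ e : Fin (m + 4), (e = 1 ∨ e = -1) ∧ w + e ∈ D := by
    simp only [mem_undominated, mem_closedNeighborFinset_cycleGraph, not_forall, not_not] at hwU
    obtain ⟨d, hd, rfl | rfl | rfl⟩ := hwU
    exacts [⟨-1, .inr rfl, by rwa [← sub_eq_add_neg]⟩, absurd hd hwD, ⟨1, .inl rfl, hd⟩]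
  refine undominatedIndepNum_le_insert_add fun T hT _ => card_le_one.2 fun x hx y hy => ?_
  suffices ∀ x ∈ T ∩ N w, x = w - e by rw [this x hx, this y hy]
  intro x hx
  rw [mem_inter, mem_closedNeighborFinset_iff_of_unit he] at hx
  obtain ⟨hxT, rfl | rfl | rfl⟩ := hx
  exacts [rfl, absurd (hT hxT) hwU, absurd hweD (notMem_of_mem_undominated_self (hT hxT))]

lemma undominatedIndepNum_le_insert_add_one (hU : ∀ x ∈ U D, x + 1 ∉ U D) (hwD : w ∉ D) :
    σ D ≤ σ (insert w D) + 1 := by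
  by_cases hwU : w ∈ U D
  · refine undominatedIndepNum_le_insert_add fun T hT _ =>
      (card_le_card fun x hx => ?_).trans (card_singleton w).le
    rw [mem_inter, mem_closedNeighborFinset_cycleGraph] at hx
    obtain ⟨hxT, rfl | rfl | rfl⟩ := hx
    · exact absurd (by simpa using hwU) (hU _ (hT hxT))
    · exact mem_singleton_self _
    · exact absurd (hT hxT) (hU w hwU)
  · exact undominatedIndepNum_le_insert_add_one_of_notMem_undominated hwD hwU

lemma undominatedIndepNum_le_insert_sub_one_add_one (hs2 : s - 2 ∉ U D) :
    σ D ≤ σ (insert (s - 1) D) + 1 :=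
  undominatedIndepNum_le_insert_add fun T hT hI => by
    refine (card_le_card fun x hx => ?_).trans
      (card_inter_pair_le_one (isIndepSet_cycleGraph_iff.1 hI) (s - 1))
    rw [mem_inter, mem_closedNeighborFinset_cycleGraph] at hx
    obtain ⟨hxT, rfl | rfl | rfl⟩ := hx
    · exact absurd (hT hxT) (by rwa [sub_sub, one_add_one_eq_two])
    all_goals simp_all

lemma mem_closedNeighborFinset_add_one : u ∈ N (s + 1) ↔ u = s ∨ u = s + 1 ∨ u = s + 2 := by
  rw [mem_closedNeighborFinset_cycleGraph, add_sub_cancel_right, show s + 1 + 1 = s + 2 by ring]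

lemma card_inter_closedNeighborFinset_add_one_le_one (hI : ∀ x ∈ T, x + 1 ∉ T)
    (hboth : ¬(s ∈ T ∧ s + 2 ∈ T)) : #(T ∩ N (s + 1)) ≤ 1 := by
  refine card_le_one.2 fun x hx y hy => ?_
  rw [mem_inter, mem_closedNeighborFinset_add_one] at hx hy
  have hI2 : s + 1 ∈ T → s + 2 ∉ T := by rw [show s + 2 = s + 1 + 1 by ring]; exact hI _
  obtain ⟨hxT, hx | hx | hx⟩ := hx <;> obtain ⟨hyT, hy | hy | hy⟩ := hy <;> subst x y
  all_goals first
    | rfl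
    | exact absurd hyT (hI _ hxT)
    | exact absurd hxT (hI _ hyT)
    | exact absurd hyT (hI2 hxT)
    | exact absurd hxT (hI2 hyT)
    | exact (hboth ⟨hxT, hyT⟩).elim
    | exact (hboth ⟨hyT, hxT⟩).elim

lemma insert_sub_one_sdiff_subset_undominated (hs1 : s - 1 ∈ U D) (hT : T ⊆ U D) :
    insert (s - 1) (T \ N (s + 1)) ⊆ U (insert (s + 1) D) := by
  refine insert_subset (mem_undominated_insert.2 ⟨hs1, ?_⟩)
    (sdiff_closedNeighborFinset_subset_undominated_insert hT)
  rw [mem_closedNeighborFinset_cycleGraph]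
  rintro (h | h | h)
  · exact Fin.natCast_ne_zero_of_pos_of_lt (n := m + 4) (k := 3) three_pos
      (by omega) (by linear_combination h)
  · exact Fin.natCast_ne_zero_of_pos_of_lt (n := m + 4) (k := 2) two_pos
      (by omega) (by linear_combination h)
  · exact Fin.natCast_ne_zero_of_pos_of_lt (n := m + 4) (k := 1) one_pos
      (by omega) (by linear_combination h)

lemma insert_sub_one_sdiff_isIndep (hs2 : s - 2 ∉ U D) (hT : T ⊆ U D) (hI : ∀ x ∈ T, x + 1 ∉ T) :
    ∀ x ∈ insert (s - 1) (T \ N (s + 1)), x + 1 ∉ insert (s - 1) (T \ N (s + 1)) := by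
  intro x hx hx1
  rcases mem_insert.1 hx with rfl | hx
  · rw [sub_add_cancel, mem_insert] at hx1
    rcases hx1 with h | h
    · exact Fin.natCast_ne_zero_of_pos_of_lt (n := m + 4) (k := 1) one_pos
        (by omega) (by linear_combination h)
    · exact (mem_sdiff.1 h).2 (mem_closedNeighborFinset_add_one.2 (.inl rfl))
  · rcases mem_insert.1 hx1 with h | h
    · rw [← eq_sub_iff_add_eq, sub_sub, one_add_one_eq_two] at h
      exact hs2 (h ▸ hT (mem_sdiff.1 hx).1)
    · exact hI x (mem_sdiff.1 hx).1 (mem_sdiff.1 h).1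

/-- An independent set through both `s` and `s + 2` trades them for `s - 1`. -/
lemma undominatedIndepNum_le_insert_add_one_add_one (hs1 : s - 1 ∈ U D) (hs2 : s - 2 ∉ U D) :
    σ D ≤ σ (insert (s + 1) D) + 1 := by
  refine undominatedIndepNum_le_add fun T hT hI => ?_
  have hI' := isIndepSet_cycleGraph_iff.1 hI
  have hsplit := card_sdiff_add_card_inter T (N (s + 1))
  by_cases hboth : s ∈ T ∧ s + 2 ∈ T
  · have hs1' : s - 1 ∉ T \ N (s + 1) :=
      fun h => hI' _ (mem_sdiff.1 h).1 (by simpa using hboth.1)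
    have : #(T ∩ N (s + 1)) ≤ 2 := card_inter_closedNeighborFinset_le_two hI' (s + 1)
    refine ⟨_, insert_sub_one_sdiff_subset_undominated hs1 hT,
      isIndepSet_cycleGraph_iff.2 (insert_sub_one_sdiff_isIndep hs2 hT hI'), ?_⟩
    rw [card_insert_of_notMem hs1']
    omega
  · have := card_inter_closedNeighborFinset_add_one_le_one hI' hboth
    exact ⟨_, sdiff_closedNeighborFinset_subset_undominated_insert hT, hI.mono (by simp),
      by omega⟩

lemma threat_insert_insert (hs : s ∈ U D) (hs1 : s - 1 ∈ U D) (hw : w ∉ N s) (hw2 : w ≠ s - 2) :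
    Threat (insert w D) (insert s S) := by
  refine ⟨s, mem_insert_self _ _, mem_undominated_insert.2 ⟨hs, hw⟩, -1, .inr rfl, .inr ?_⟩
  rw [show s + 2 * -1 = s - 1 - 1 by ring, mem_insert, not_or]
  exact ⟨by rw [sub_sub, one_add_one_eq_two]; exact hw2.symm,
    notMem_of_mem_undominated hs1 (mem_closedNeighborFinset_cycleGraph.2 (.inl rfl))⟩

def IsSharpMove (D S : Finset (Fin (m + 4))) (w : Fin (m + 4)) : Prop :=
  w ∉ D ∧ w ∉ S ∧ σ (insert w D) + 2 ≤ σ D ∧ ¬Threat (insert w D) S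

lemma exists_run_start (hD : D.Nonempty) (hU : ¬∀ x ∈ U D, x + 1 ∉ U D) :
    ∃ s, s ∈ U D ∧ s - 1 ∈ U D ∧ s - 2 ∉ U D := by
  push Not at hU
  obtain ⟨a, haU, ha1U⟩ := hU
  obtain ⟨d, hd⟩ := hD
  obtain ⟨s, ⟨hs, hs1⟩, hs2⟩ := Fin.exists_and_not_sub_one (P := fun x => x ∈ U D ∧ x - 1 ∈ U D)
    (x := a + 1) (y := d) ⟨ha1U, by simpa using haU⟩
    fun h => notMem_of_mem_undominated_self h.1 hd
  exact ⟨s, hs, hs1, fun h => hs2 ⟨hs1, by rwa [sub_sub, one_add_one_eq_two]⟩⟩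

lemma not_isSharpMove_of_run_start (hs : s ∈ U D) (hs1 : s - 1 ∈ U D) (hs2 : s - 2 ∉ U D) :
    ¬IsSharpMove D (insert s S) w := by
  rintro ⟨hwD, hwS, hdrop, hthreat⟩
  by_cases hw : w ∈ N s
  · rw [mem_closedNeighborFinset_cycleGraph] at hw
    obtain rfl | rfl | rfl := hw
    · have := undominatedIndepNum_le_insert_sub_one_add_one hs2
      omega
    · exact hwS (mem_insert_self _ _)
    · have := undominatedIndepNum_le_insert_add_one_add_one hs1 hs2
      omega
  · by_cases hw2 : w = s - 2
    · subst hw2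
      have := undominatedIndepNum_le_insert_add_one_of_notMem_undominated hwD hs2
      omega
    · exact hthreat (threat_insert_insert hs hs1 hw hw2)

/-- Staller's strategy: take the second vertex of a run of at least two undominated vertices,
if there is one. -/
lemma exists_forall_not_isSharpMove (hD : D.Nonempty) (hS : ¬Threat D S)
    (hfree : ∃ z, z ∉ D ∧ z ∉ S) : ∃ v, v ∉ D ∧ v ∉ S ∧ ∀ w, ¬IsSharpMove D (insert v S) w := by
  by_cases hU : ∀ x ∈ U D, x + 1 ∉ U D
  · obtain ⟨z, hzD, hzS⟩ := hfree
    refine ⟨z, hzD, hzS, fun w ⟨hwD, _, hdrop, _⟩ => ?_⟩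
    have := undominatedIndepNum_le_insert_add_one hU hwD
    omega
  obtain ⟨s, hs, hs1, hs2⟩ := exists_run_start hD hU
  have hs2D : s + 2 * -1 ∉ D := by
    rw [show s + 2 * -1 = s - 1 - 1 by ring]
    exact notMem_of_mem_undominated hs1 (mem_closedNeighborFinset_cycleGraph.2 (.inl rfl))
  exact ⟨s, notMem_of_mem_undominated_self hs,
    fun hsS => hS ⟨s, hsS, hs, -1, .inr rfl, .inr hs2D⟩,
    fun w => not_isSharpMove_of_run_start hs hs1 hs2⟩

open Classical in
theorem undominatedIndepNum_le_of_mbWin {t : Bool} {k : ℕ}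
    (h : MBWin (cycleGraph (m + 4)) ∅ t k D S) (hD : D.Nonempty) :
    σ D ≤ k + if t ∧ ∃ w, IsSharpMove D S w then 1 else 0 := by
  induction h with
  | win t k D S hdom => simp [undominatedIndepNum_eq_zero hdom]
  | dmove k D S v hvD hvS h ih =>
    have hv : σ (insert v D) ≤ k := by simpa using ih (insert_nonempty _ _)
    have := undominatedIndepNum_le_insert_add_two D v
    by_cases hsharp : ∃ w, IsSharpMove D S w
    · rw [if_pos ⟨rfl, hsharp⟩]
      omega
    · have hthreat : ¬Threat (insert v D) S := h.not_threat.2 rfl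
      have : ¬σ (insert v D) + 2 ≤ σ D := fun hle => hsharp ⟨v, hvD, hvS, hle, hthreat⟩
      rw [if_neg fun h => hsharp h.2]
      omega
  | smove k D S hne hall ih =>
    have hS : ¬Threat D S := (MBWin.smove k D S hne hall).not_threat.2 rfl
    obtain ⟨v, hvD, hvS, hv⟩ :=
      exists_forall_not_isSharpMove hD hS (exists_notMem_of_union_ne_univ hne)
    simpa [hv] using ih v hvD hvS hD

lemma le_undominatedIndepNum_singleton (v : Fin (m + 4)) : (m + 4) / 2 ≤ σ {v} + 1 := by
  let T := (range ((m + 4) / 2 - 1)).image fun i => v + ((2 * i + 2 : ℕ) : Fin (m + 4))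
  have hcard : #T = (m + 4) / 2 - 1 := by
    refine (card_image_of_injOn fun i hi j hj h => ?_).trans (card_range _)
    simp only [coe_range, Set.mem_Iio] at hi hj
    have := (add_natCast_inj v (by omega) (by omega)).1 h
    omega
  have hT : T ⊆ U {v} := by
    simp only [T, image_subset_iff, mem_range, mem_undominated, mem_singleton, forall_eq]
    intro i hi
    rw [mem_closedNeighborFinset_comm, mem_closedNeighborFinset_cycleGraph]
    rintro (h | h | h)
    · rw [sub_one_eq_add_natCast, add_natCast_inj v (by omega) (by omega)] at h
      omega
    · exact add_natCast_ne_self v (by omega) (by omega) h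
    · exact add_natCast_ne_add_one v (by omega) (by omega) h
  have hI : (cycleGraph (m + 4)).IsIndepSet (T : Set (Fin (m + 4))) := by
    rw [isIndepSet_cycleGraph_iff]
    intro x hx hx1
    obtain ⟨i, hi, rfl⟩ := mem_image.1 hx
    obtain ⟨j, hj, h⟩ := mem_image.1 hx1
    rw [mem_range] at hi hj
    rw [add_assoc v, ← Nat.cast_add_one (R := Fin (m + 4)),
      add_natCast_inj v (by omega) (by omega)] at h
    omega
  have := card_le_undominatedIndepNum hT hI
  omega

theorem le_of_mbWin_empty {t : Bool} {k : ℕ} {S : Finset (Fin (m + 4))}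
    (h : MBWin (cycleGraph (m + 4)) ∅ t k ∅ S) : (m + 4) / 2 ≤ k := by
  have htrue : ∀ {k S}, MBWin (cycleGraph (m + 4)) ∅ true k ∅ S → (m + 4) / 2 ≤ k := by
    intro k S h
    cases h with
    | win _ _ _ _ hdom => exact absurd hdom not_dominates_empty
    | dmove k _ _ v _ _ h =>
      have h₁ : σ {v} ≤ k := by simpa using undominatedIndepNum_le_of_mbWin h (singleton_nonempty v)
      have h₂ := le_undominatedIndepNum_singleton v
      omega
  cases t with
  | true => exact htrue h
  | false =>
    cases h with
    | win _ _ _ _ hdom => exact absurd hdom not_dominates_empty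
    | smove _ _ _ hne hall =>
      obtain ⟨z, hz, hzS⟩ := exists_notMem_of_union_ne_univ hne
      exact htrue (hall z hz hzS)

end LowerBound

lemma sInf_natCast_image_eq {P : ℕ → Prop} {k : ℕ} (hk : P k) (hle : ∀ m, P m → k ≤ m) :
    sInf ((fun m : ℕ => (m : ℕ∞)) '' {m | P m}) = k :=
  IsLeast.csInf_eq ⟨⟨k, hk, rfl⟩, by rintro _ ⟨m, hm, rfl⟩; exact Nat.cast_le.2 (hle m hm)⟩

/-- For every integer `n ≥ 3`, the cycle `C_n` satisfies
`γ_MB(C_n) = γ_MB'(C_n) = ⌊n/2⌋`. -/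
theorem gammaMB_cycle (n : ℕ) (hn : 3 ≤ n) :
    gammaMB (SimpleGraph.cycleGraph n) = ((n / 2 : ℕ) : ℕ∞) ∧
    gammaMB' (SimpleGraph.cycleGraph n) = ((n / 2 : ℕ) : ℕ∞) := by
  have hlow : ∀ t k, MBWin (cycleGraph n) ∅ t k ∅ ∅ → n / 2 ≤ k := by
    obtain rfl | ⟨m, rfl⟩ : n = 3 ∨ ∃ m, n = m + 4 :=
      (eq_or_lt_of_le hn).imp Eq.symm fun h => ⟨n - 4, by omega⟩
    · exact fun t k h => h.pos_of_empty
    · exact fun t k h => le_of_mbWin_empty h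
  obtain ⟨m, rfl⟩ : ∃ m, n = m + 2 := ⟨n - 2, by omega⟩
  obtain ⟨hD, hS⟩ := mbWin_cycleGraph_half m
  exact ⟨sInf_natCast_image_eq hD (hlow true), sInf_natCast_image_eq hS (hlow false)⟩
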